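/- Let G be a finite group, K a field whose characteristic does not divide |G|, V a finite-dimensional representation of G, T = K[V], and f_1,...,f_r a minimal set of homogeneous generators of R = K[V]^G of degrees d_1,...,d_r. Let U = {(w_1,...,w_r) ∈ T[−d_1] ⊕ ... ⊕ T[−d_r] : Σ w_i f_i = 0} be the first syzygy module of f_1,...,f_r over T. Then U is generated as a T-module by its homogeneous elements of degree at most τ_G(V) + 1. -/

import Mathlib

/-!
Every generator has degree at most `τ`: otherwise `fᵢ = ∑ⱼ Xⱼ qⱼ` with all `qⱼ ∈ I`, which gives a
relation `fᵢ = ∑ₗ hₗ fₗ` with `hᵢ = 0` and homogeneous `hₗ` of degree `< dᵢ`; averaging it over `G`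
writes `fᵢ` as a polynomial in the other generators.

Now let `w` be a homogeneous syzygy of degree `e + 2 ≥ τ + 2` and write `w = ∑ⱼ Xⱼ qⱼ`. The
polynomials `pⱼ = ∑ᵢ qⱼᵢ fᵢ` satisfy `∑ⱼ Xⱼ pⱼ = 0`, so by exactness of the Koszul complex of the
variables `pⱼ = ∑ₖ Xₖ (aⱼₖ - aₖⱼ)` with `aⱼₖ` homogeneous of degree `e ≥ τ`, hence in `I`. Lifting
each `aⱼₖ` to a coefficient vector `Bⱼₖ` turns `vⱼ = qⱼ - ∑ₖ Xₖ (Bⱼₖ - Bₖⱼ)` into syzygies of degree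
`e + 1` with `w = ∑ⱼ Xⱼ vⱼ`, and induction on the degree finishes the proof.
-/

open Finset

namespace MvPolynomial

section Graded

variable {σ R ι : Type*} [CommSemiring R]

attribute [local instance] gradedAlgebra

theorem homogeneousComponent_mul_of_isHomogeneous {g : MvPolynomial σ R} {m : ℕ}
    (hg : g.IsHomogeneous m) (c : MvPolynomial σ R) (e : ℕ) :
    homogeneousComponent e (c * g) =
      if m ≤ e then homogeneousComponent (e - m) c * g else 0 := by
  simp_rw [← decomposition.decompose'_apply]
  exact DirectSum.coe_decompose_mul_of_right_mem (homogeneousSubmodule σ R) e (a := c) hg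

theorem homogeneousComponent_X_mul (j : σ) (c : MvPolynomial σ R) (e : ℕ) :
    homogeneousComponent (e + 1) (X j * c) = X j * homogeneousComponent e c := by
  rw [mul_comm, homogeneousComponent_mul_of_isHomogeneous (isHomogeneous_X R j),
    if_pos (Nat.le_add_left 1 e), Nat.add_sub_cancel, mul_comm]

theorem IsHomogeneous.exists_sum_X_mul_eq [Fintype σ] {p : MvPolynomial σ R} {e : ℕ}
    (hp : p.IsHomogeneous (e + 1)) :
    ∃ q : σ → MvPolynomial σ R, (∀ j, (q j).IsHomogeneous e) ∧ ∑ j, X j * q j = p := by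
  have hmem : p ∈ idealOfVars σ R := by
    rw [← pow_one (idealOfVars σ R), mem_pow_idealOfVars_iff]
    intro m hm
    rw [Finsupp.degree_eq_weight_one]
    exact (hp (mem_support_iff.1 hm)).symm ▸ Nat.le_add_left 1 e
  obtain ⟨q, hq⟩ := Ideal.mem_span_range_iff_exists_fun.1 hmem
  refine ⟨fun j => homogeneousComponent e (q j),
    fun j => homogeneousComponent_isHomogeneous _ _, ?_⟩
  simp_rw [← homogeneousComponent_X_mul, ← map_sum, mul_comm (X _), hq]
  exact homogeneousComponent_eq_self hp

theorem IsHomogeneous.mem_of_le [Fintype σ] {I : Ideal (MvPolynomial σ R)} {τ : ℕ}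
    (hI : ∀ p : MvPolynomial σ R, p.IsHomogeneous τ → p ∈ I) {e : ℕ} (he : τ ≤ e)
    {p : MvPolynomial σ R} (hp : p.IsHomogeneous e) : p ∈ I := by
  induction e, he using Nat.le_induction generalizing p with
  | base => exact hI p hp
  | succ e _ ih =>
    obtain ⟨q, hq, rfl⟩ := hp.exists_sum_X_mul_eq
    exact Ideal.sum_mem _ fun j _ => I.mul_mem_left _ (ih (hq j))

theorem isHomogeneous_iff_coeff_ne_zero {p : MvPolynomial σ R} {n : ℕ} :
    p.IsHomogeneous n ↔ ∀ m, coeff m p ≠ 0 → m.degree = n := by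
  simp_rw [Finsupp.degree_eq_weight_one]
  rfl

variable (σ R) in
/-- The degree-`e` part of `T[-d₁] ⊕ ⋯ ⊕ T[-dᵣ]` for `T = MvPolynomial σ R`. -/
noncomputable def shiftedHomogeneousSubmodule (d : ι → ℕ) (e : ℕ) :
    Submodule R (ι → MvPolynomial σ R) :=
  Submodule.pi Set.univ fun i => if d i ≤ e then homogeneousSubmodule σ R (e - d i) else ⊥

variable {d : ι → ℕ} {e : ℕ} {w : ι → MvPolynomial σ R}

/-- The second condition is not implied by the first, since `e - d i` truncates. -/
theorem mem_shiftedHomogeneousSubmodule :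
    w ∈ shiftedHomogeneousSubmodule σ R d e ↔
      ∀ i, (w i).IsHomogeneous (e - d i) ∧ (e < d i → w i = 0) := by
  simp only [shiftedHomogeneousSubmodule, Submodule.mem_pi, Set.mem_univ, true_implies]
  refine forall_congr' fun i => ?_
  split_ifs with h
  · simp [mem_homogeneousSubmodule, h]
  · simp only [Submodule.mem_bot, not_le.1 h, true_implies]
    exact ⟨fun h0 => ⟨h0 ▸ isHomogeneous_zero _ _ _, h0⟩, And.right⟩

theorem mem_shiftedHomogeneousSubmodule_iff_coeff :
    w ∈ shiftedHomogeneousSubmodule σ R d e ↔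
      ∀ i m, coeff m (w i) ≠ 0 → m.degree + d i = e := by
  rw [mem_shiftedHomogeneousSubmodule]
  simp_rw [isHomogeneous_iff_coeff_ne_zero]
  refine forall_congr' fun i =>
    ⟨fun ⟨hom, hzero⟩ m hm => ?_, fun h => ⟨fun m hm => ?_, fun hlt => ?_⟩⟩
  · by_cases hle : d i ≤ e
    · have := hom m hm; omega
    · exact absurd (hzero (not_le.1 hle)) fun h0 => hm (by simp [h0])
  · have := h m hm; omega
  · ext m
    by_contra hm
    have := h m hm
    omega

theorem smul_mem_shiftedHomogeneousSubmodule {p : MvPolynomial σ R} {a : ℕ}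
    (hp : p.IsHomogeneous a) (hw : w ∈ shiftedHomogeneousSubmodule σ R d e) :
    p • w ∈ shiftedHomogeneousSubmodule σ R d (e + a) := by
  rw [mem_shiftedHomogeneousSubmodule] at hw ⊢
  intro i
  by_cases hle : d i ≤ e
  · refine ⟨?_, fun h => by omega⟩
    rw [show e + a - d i = a + (e - d i) by omega]
    exact hp.mul (hw i).1
  · simp only [Pi.smul_apply, smul_eq_mul, (hw i).2 (not_le.1 hle), mul_zero]
    exact ⟨isHomogeneous_zero _ _ _, fun _ => trivial⟩

variable (d) in
noncomputable def shiftedComponent (e : ℕ) (w : ι → MvPolynomial σ R) : ι → MvPolynomial σ R :=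
  fun i => if d i ≤ e then homogeneousComponent (e - d i) (w i) else 0

theorem shiftedComponent_mem (e : ℕ) (w : ι → MvPolynomial σ R) :
    shiftedComponent d e w ∈ shiftedHomogeneousSubmodule σ R d e := by
  rw [mem_shiftedHomogeneousSubmodule]
  intro i
  unfold shiftedComponent
  split_ifs with h
  · exact ⟨homogeneousComponent_isHomogeneous _ _, fun h' => absurd h (not_le.2 h')⟩
  · exact ⟨isHomogeneous_zero _ _ _, fun _ => rfl⟩

theorem sum_shiftedComponent {N : ℕ} (hN : ∀ i, (w i).totalDegree + d i < N) :
    ∑ e ∈ range N, shiftedComponent d e w = w := by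
  funext i
  have hN' : N = d i + (N - d i) := by have := hN i; omega
  rw [Finset.sum_apply, hN', Finset.sum_range_add, Finset.sum_eq_zero fun e he => by
    simp [shiftedComponent, not_le.2 (mem_range.1 he)], zero_add]
  simp only [shiftedComponent, Nat.le_add_right, if_true, Nat.add_sub_cancel_left]
  refine (Finset.sum_subset (fun e he => ?_) fun e _ he => ?_).symm.trans
    (sum_homogeneousComponent (w i))
  · have := hN i; simp only [mem_range] at he ⊢; omega
  · exact homogeneousComponent_eq_zero _ _ (by simp only [mem_range] at he; omega)

theorem exists_sum_X_smul_eq_of_mem_shiftedHomogeneousSubmodule [Fintype σ]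
    (hd : ∀ i, d i ≤ e) (hw : w ∈ shiftedHomogeneousSubmodule σ R d (e + 1)) :
    ∃ q : σ → ι → MvPolynomial σ R,
      (∀ j, q j ∈ shiftedHomogeneousSubmodule σ R d e) ∧
      ∑ j, (X j : MvPolynomial σ R) • q j = w := by
  rw [mem_shiftedHomogeneousSubmodule] at hw
  have hwi (i : ι) : (w i).IsHomogeneous (e - d i + 1) := by
    rw [← Nat.sub_add_comm (hd i)]; exact (hw i).1
  choose q hq hqw using fun i => (hwi i).exists_sum_X_mul_eq
  refine ⟨fun j i => q i j, fun j => ?_, ?_⟩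
  · exact mem_shiftedHomogeneousSubmodule.2 fun i => ⟨hq i j, fun h => absurd (hd i) (not_le.2 h)⟩
  · ext1 i
    simp only [Finset.sum_apply, Pi.smul_apply, smul_eq_mul, hqw]

variable [Fintype ι] {f : ι → MvPolynomial σ R}

theorem sum_sum_smul_apply_mul {κ : Type*} [Fintype κ] (c : κ → MvPolynomial σ R)
    (q : κ → ι → MvPolynomial σ R) :
    ∑ i, (∑ j, c j • q j) i * f i = ∑ j, c j * ∑ i, q j i * f i := by
  simp only [Finset.sum_apply, Pi.smul_apply, smul_eq_mul, Finset.sum_mul, Finset.mul_sum,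
    mul_assoc]
  exact Finset.sum_comm

theorem isHomogeneous_sum_mul (hf : ∀ i, (f i).IsHomogeneous (d i))
    (hw : w ∈ shiftedHomogeneousSubmodule σ R d e) : (∑ i, w i * f i).IsHomogeneous e := by
  rw [mem_shiftedHomogeneousSubmodule] at hw
  refine IsHomogeneous.sum _ _ _ fun i _ => ?_
  by_cases hle : d i ≤ e
  · simpa [Nat.sub_add_cancel hle] using (hw i).1.mul (hf i)
  · simpa [(hw i).2 (not_le.1 hle)] using isHomogeneous_zero σ R e

theorem sum_shiftedComponent_mul (hf : ∀ i, (f i).IsHomogeneous (d i)) (e : ℕ)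
    (w : ι → MvPolynomial σ R) :
    ∑ i, shiftedComponent d e w i * f i = homogeneousComponent e (∑ i, w i * f i) := by
  rw [map_sum]
  refine Finset.sum_congr rfl fun i _ => ?_
  rw [homogeneousComponent_mul_of_isHomogeneous (hf i), shiftedComponent]
  split_ifs <;> simp

theorem exists_mem_shiftedHomogeneousSubmodule_sum_mul_eq
    (hf : ∀ i, (f i).IsHomogeneous (d i)) {p : MvPolynomial σ R} (hp : p.IsHomogeneous e)
    (hmem : p ∈ Ideal.span (Set.range f)) :
    ∃ c ∈ shiftedHomogeneousSubmodule σ R d e, ∑ i, c i * f i = p := by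
  obtain ⟨c, hc⟩ := Ideal.mem_span_range_iff_exists_fun.1 hmem
  refine ⟨shiftedComponent d e c, shiftedComponent_mem e c, ?_⟩
  rw [sum_shiftedComponent_mul hf, hc, homogeneousComponent_eq_self hp]

theorem exists_eq_sum_mul_of_lt [Fintype σ] (hf : ∀ i, (f i).IsHomogeneous (d i)) {τ : ℕ}
    (hτ : ∀ p : MvPolynomial σ R, p.IsHomogeneous τ → p ∈ Ideal.span (Set.range f))
    {i : ι} (hi : τ < d i) :
    ∃ h ∈ shiftedHomogeneousSubmodule σ R d (d i), h i = 0 ∧ f i = ∑ l, h l * f l := by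
  obtain ⟨e, he, hdi⟩ : ∃ e, τ ≤ e ∧ d i = e + 1 := ⟨d i - 1, by omega, by omega⟩
  obtain ⟨q, hq, hfq⟩ := (hdi ▸ hf i).exists_sum_X_mul_eq
  choose b hb hbq using fun j =>
    exists_mem_shiftedHomogeneousSubmodule_sum_mul_eq hf (hq j) ((hq j).mem_of_le hτ he)
  refine ⟨∑ j, (X j : MvPolynomial σ R) • b j, ?_, ?_, ?_⟩
  · rw [hdi]
    exact sum_mem fun j _ => smul_mem_shiftedHomogeneousSubmodule (isHomogeneous_X R j) (hb j)
  · simp [Finset.sum_apply, fun j => (mem_shiftedHomogeneousSubmodule.1 (hb j) i).2 (by omega)]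
  · rw [sum_sum_smul_apply_mul, ← hfq]
    simp only [hbq]

end Graded

section Koszul

variable {σ R : Type*}

theorem sum_smul_sum_smul_sub_swap_eq_zero {A M κ : Type*} [CommRing A] [AddCommGroup M]
    [Module A M] [Fintype κ] (x : κ → A) (b : κ → κ → M) :
    ∑ j, x j • ∑ k, x k • (b j k - b k j) = 0 := by
  simp only [smul_sum, smul_sub, smul_smul, sum_sub_distrib]
  rw [sub_eq_zero, sum_comm]
  simp only [mul_comm]

theorem mem_ideal_span_X_image_of_X_mul_mem [CommSemiring R] {s : Set σ} {j : σ} (hj : j ∉ s)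
    {p : MvPolynomial σ R} (hp : X j * p ∈ Ideal.span (X '' s)) :
    p ∈ Ideal.span (X '' s) := by
  rw [mem_ideal_span_X_image] at hp ⊢
  intro m hm
  have hcoeff : coeff (m + Finsupp.single j 1) (X j * p) = coeff m p := by
    rw [mul_comm, coeff_mul_X]
  obtain ⟨i, his, hi⟩ := hp _ (by rwa [mem_support_iff, hcoeff, ← mem_support_iff])
  have hij : j ≠ i := fun h => hj (h ▸ his)
  exact ⟨i, his, by simpa [Finsupp.single_apply, hij] using hi⟩

theorem exists_sum_X_mul_eq_of_mem_ideal_span_X_image [CommSemiring R] [Fintype σ] {s : Set σ}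
    {p : MvPolynomial σ R} (hp : p ∈ Ideal.span (X '' s)) :
    ∃ b : σ → MvPolynomial σ R, (∀ k ∉ s, b k = 0) ∧ ∑ k, X k * b k = p := by
  obtain ⟨b, hbs, hb⟩ := Finsupp.mem_span_image_iff_linearCombination _ |>.1 hp
  refine ⟨b, fun k hk => Finsupp.notMem_support_iff.1 fun h => hk (hbs h), ?_⟩
  rw [← hb, Finsupp.linearCombination_apply, Finsupp.sum_fintype _ _ (by simp)]
  simp [mul_comm]

variable [CommRing R] [Fintype σ]

theorem exists_eq_sum_X_mul_sub_of_support_subset (s : Finset σ) {p : σ → MvPolynomial σ R}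
    (hps : ∀ j ∉ s, p j = 0) (hp : ∑ j, X j * p j = 0) :
    ∃ a : σ → σ → MvPolynomial σ R, ∀ j, p j = ∑ k, X k * (a j k - a k j) := by
  classical
  induction s using Finset.induction_on generalizing p with
  | empty => exact ⟨0, fun j => by simp [hps j (notMem_empty j)]⟩
  | @insert j₀ s hj₀ ih =>
    have hsplit : ∑ j, X j * p j = X j₀ * p j₀ + ∑ j ∈ s, X j * p j := by
      rw [← sum_insert hj₀ (f := fun j => X j * p j)]
      exact (sum_subset (subset_univ _) fun j _ hj => by rw [hps j hj, mul_zero]).symm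
    have hX : X j₀ * p j₀ ∈ Ideal.span (X '' (s : Set σ)) := by
      rw [eq_neg_of_add_eq_zero_left (hsplit ▸ hp : X j₀ * p j₀ + _ = 0)]
      exact neg_mem (Ideal.sum_mem _ fun j hj =>
        Ideal.mul_mem_right _ _ (Ideal.subset_span ⟨j, hj, rfl⟩))
    obtain ⟨b, hbs, hb⟩ :=
      exists_sum_X_mul_eq_of_mem_ideal_span_X_image (mem_ideal_span_X_image_of_X_mul_mem hj₀ hX)
    -- Trading `p j₀` for the column `b` produces a relation supported on `s`.
    set p' : σ → MvPolynomial σ R := fun j => p j + X j₀ * b j - if j = j₀ then p j₀ else 0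
    have hp's : ∀ j ∉ s, p' j = 0 := by
      intro j hj
      by_cases hjj : j = j₀
      · subst hjj; simp [p', hbs _ hj₀]
      · simp [p', hjj, hbs j hj, hps j (by simp [hjj, hj])]
    have hp' : ∑ j, X j * p' j = 0 := by
      have hterm (j : σ) : X j * p' j =
          X j * p j + X j₀ * (X j * b j) - if j = j₀ then X j₀ * p j₀ else 0 := by
        by_cases hjj : j = j₀
        · subst hjj; simp only [p', if_true]; ring
        · simp only [p', hjj, if_false]; ring
      simp only [hterm, sum_sub_distrib, sum_add_distrib, ← mul_sum, hp, hb, sum_ite_eq',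
        mem_univ, if_true, zero_add, sub_self]
    obtain ⟨a, ha⟩ := ih hp's hp'
    refine ⟨fun j k => a j k + if j = j₀ then b k else 0, fun j => ?_⟩
    have hrow : ∑ k, X k * (if j = j₀ then b k else 0) = if j = j₀ then p j₀ else 0 := by
      split_ifs <;> simp [hb]
    have hcol : ∑ k, X k * (if k = j₀ then b j else 0) = X j₀ * b j := by simp
    calc p j = p' j + (if j = j₀ then p j₀ else 0) - X j₀ * b j := by simp only [p']; ring
      _ = _ := by
        rw [ha j, ← hrow, ← hcol, ← sum_add_distrib, ← sum_sub_distrib]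
        exact sum_congr rfl fun k _ => by ring

theorem exists_isHomogeneous_eq_sum_X_mul_sub {p : σ → MvPolynomial σ R} {e : ℕ}
    (hhom : ∀ j, (p j).IsHomogeneous (e + 1)) (hp : ∑ j, X j * p j = 0) :
    ∃ a : σ → σ → MvPolynomial σ R,
      (∀ j k, (a j k).IsHomogeneous e) ∧ ∀ j, p j = ∑ k, X k * (a j k - a k j) := by
  obtain ⟨a, ha⟩ :=
    exists_eq_sum_X_mul_sub_of_support_subset univ (fun j hj => absurd (mem_univ j) hj) hp
  refine ⟨fun j k => homogeneousComponent e (a j k),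
    fun _ _ => homogeneousComponent_isHomogeneous _ _, fun j => ?_⟩
  rw [← homogeneousComponent_eq_self (hhom j), ha j, map_sum]
  simp_rw [homogeneousComponent_X_mul, map_sub]

end Koszul

section Syzygies

variable {σ R ι : Type*} [CommRing R] [Fintype σ] [Fintype ι] {f : ι → MvPolynomial σ R}
  {d : ι → ℕ} {w : ι → MvPolynomial σ R}

theorem exists_sum_X_smul_eq_of_sum_mul_eq_zero (hf : ∀ i, (f i).IsHomogeneous (d i)) {τ : ℕ}
    (hτ : ∀ p : MvPolynomial σ R, p.IsHomogeneous τ → p ∈ Ideal.span (Set.range f))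
    (hd : ∀ i, d i ≤ τ) {e : ℕ} (he : τ ≤ e)
    (hw : w ∈ shiftedHomogeneousSubmodule σ R d (e + 2)) (hsyz : ∑ i, w i * f i = 0) :
    ∃ v : σ → ι → MvPolynomial σ R,
      (∀ j, v j ∈ shiftedHomogeneousSubmodule σ R d (e + 1) ∧ ∑ i, v j i * f i = 0) ∧
      ∑ j, (X j : MvPolynomial σ R) • v j = w := by
  obtain ⟨q, hq, rfl⟩ := exists_sum_X_smul_eq_of_mem_shiftedHomogeneousSubmodule
    (fun i => (hd i).trans (he.trans (Nat.le_succ e))) hw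
  set p : σ → MvPolynomial σ R := fun j => ∑ i, q j i * f i
  have hp : ∑ j, X j * p j = 0 := by rw [← sum_sum_smul_apply_mul]; exact hsyz
  obtain ⟨a, ha, hpa⟩ :=
    exists_isHomogeneous_eq_sum_X_mul_sub (fun j => isHomogeneous_sum_mul hf (hq j)) hp
  choose B hB hBa using fun j k =>
    exists_mem_shiftedHomogeneousSubmodule_sum_mul_eq hf (ha j k) ((ha j k).mem_of_le hτ he)
  -- `u j` lifts the Koszul expression of `p j` to a vector of degree `e + 1`.
  set u : σ → ι → MvPolynomial σ R := fun j => ∑ k, (X k : MvPolynomial σ R) • (B j k - B k j)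
  have hu (j : σ) : u j ∈ shiftedHomogeneousSubmodule σ R d (e + 1) :=
    sum_mem fun k _ => smul_mem_shiftedHomogeneousSubmodule (isHomogeneous_X R k)
      (sub_mem (hB j k) (hB k j))
  have hup (j : σ) : ∑ i, u j i * f i = p j := by
    rw [sum_sum_smul_apply_mul]
    simp only [p, hpa j, Pi.sub_apply, sub_mul, sum_sub_distrib, hBa]
  have hXu : ∑ j, (X j : MvPolynomial σ R) • u j = 0 := sum_smul_sum_smul_sub_swap_eq_zero _ B
  refine ⟨fun j => q j - u j, fun j => ⟨sub_mem (hq j) (hu j), ?_⟩, ?_⟩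
  · simp only [Pi.sub_apply, sub_mul, sum_sub_distrib, hup, p, sub_self]
  · simp only [smul_sub, sum_sub_distrib, hXu, sub_zero]

theorem mem_span_of_mem_shiftedHomogeneousSubmodule (hf : ∀ i, (f i).IsHomogeneous (d i))
    {τ : ℕ} (hτ : ∀ p : MvPolynomial σ R, p.IsHomogeneous τ → p ∈ Ideal.span (Set.range f))
    (hd : ∀ i, d i ≤ τ) {e : ℕ} (hw : w ∈ shiftedHomogeneousSubmodule σ R d e)
    (hsyz : ∑ i, w i * f i = 0) :
    w ∈ Submodule.span (MvPolynomial σ R)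
      {w | ∑ i, w i * f i = 0 ∧ ∃ e ≤ τ + 1, w ∈ shiftedHomogeneousSubmodule σ R d e} := by
  induction e using Nat.strong_induction_on generalizing w with
  | _ e ih =>
  by_cases he : e ≤ τ + 1
  · exact Submodule.subset_span ⟨hsyz, e, he, hw⟩
  · obtain ⟨e, rfl⟩ : ∃ e', e = e' + 2 := ⟨e - 2, by omega⟩
    obtain ⟨v, hv, rfl⟩ := exists_sum_X_smul_eq_of_sum_mul_eq_zero hf hτ hd (by omega) hw hsyz
    exact sum_mem fun j _ => Submodule.smul_mem _ _ (ih (e + 1) (by omega) (hv j).1 (hv j).2)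

theorem mem_span_of_sum_mul_eq_zero (hf : ∀ i, (f i).IsHomogeneous (d i))
    {τ : ℕ} (hτ : ∀ p : MvPolynomial σ R, p.IsHomogeneous τ → p ∈ Ideal.span (Set.range f))
    (hd : ∀ i, d i ≤ τ) (hsyz : ∑ i, w i * f i = 0) :
    w ∈ Submodule.span (MvPolynomial σ R)
      {w | ∑ i, w i * f i = 0 ∧ ∃ e ≤ τ + 1, w ∈ shiftedHomogeneousSubmodule σ R d e} := by
  obtain ⟨N, hN⟩ : ∃ N, ∀ i, (w i).totalDegree + d i < N :=
    ⟨∑ i, ((w i).totalDegree + d i) + 1, fun i =>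
      Nat.lt_succ_of_le (single_le_sum (f := fun i => (w i).totalDegree + d i)
        (fun _ _ => Nat.zero_le _) (mem_univ i))⟩
  rw [← sum_shiftedComponent hN]
  refine sum_mem fun e _ =>
    mem_span_of_mem_shiftedHomogeneousSubmodule hf hτ hd (shiftedComponent_mem e w) ?_
  rw [sum_shiftedComponent_mul hf, hsyz, map_zero]

end Syzygies

section Adjoin

variable {σ R ι : Type*} [CommSemiring R]

theorem mem_adjoin_image_of_isHomogeneous {f : ι → MvPolynomial σ R} {d : ι → ℕ}
    (hf : ∀ i, (f i).IsHomogeneous (d i)) {p : MvPolynomial σ R} {e : ℕ}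
    (hp : p ∈ Algebra.adjoin R (Set.range f)) (hpe : p.IsHomogeneous e) :
    p ∈ Algebra.adjoin R (f '' {j | d j ≤ e}) := by
  set Q : ℕ → Subalgebra R (MvPolynomial σ R) := fun δ => Algebra.adjoin R (f '' {j | d j ≤ δ})
  have hQ : Monotone Q := fun δ δ' h =>
    Algebra.adjoin_mono (Set.image_mono fun _ hj => le_trans hj h)
  -- Each product of generators is homogeneous, of degree at least that of each of its factors.
  have hprod : ∀ m ∈ Submonoid.closure (Set.range f), ∃ δ, m.IsHomogeneous δ ∧ m ∈ Q δ := by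
    intro m hm
    induction hm using Submonoid.closure_induction with
    | mem x hx =>
      obtain ⟨l, rfl⟩ := hx
      exact ⟨d l, hf l, Algebra.subset_adjoin ⟨l, le_refl (d l), rfl⟩⟩
    | one => exact ⟨0, isHomogeneous_one _ _, Subalgebra.one_mem _⟩
    | mul x y _ _ hx hy =>
      obtain ⟨δ₁, hx, hxQ⟩ := hx
      obtain ⟨δ₂, hy, hyQ⟩ := hy
      exact ⟨δ₁ + δ₂, hx.mul hy, Subalgebra.mul_mem _ (hQ (Nat.le_add_right _ _) hxQ)
        (hQ (Nat.le_add_left _ _) hyQ)⟩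
  have hspan : Submodule.span R (Submonoid.closure (Set.range f) : Set (MvPolynomial σ R)) ≤
      (Subalgebra.toSubmodule (Q e)).comap (homogeneousComponent e) := by
    rw [Submodule.span_le]
    intro m hm
    obtain ⟨δ, hδ, hmQ⟩ := hprod m hm
    simp only [SetLike.mem_coe, Submodule.mem_comap, Subalgebra.mem_toSubmodule,
      homogeneousComponent_of_mem hδ]
    split_ifs with h
    · exact h ▸ hmQ
    · exact Subalgebra.zero_mem _
  have := hspan (by rwa [← Algebra.adjoin_eq_span])
  rwa [Submodule.mem_comap, homogeneousComponent_eq_self hpe] at this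

end Adjoin

section Invariants

theorem IsHomogeneous.smul_of_isHomogeneous_smul_X {σ K G : Type*} [CommSemiring K] [Monoid G]
    [MulSemiringAction G (MvPolynomial σ K)] [SMulCommClass G K (MvPolynomial σ K)]
    (hX : ∀ (g : G) i, (g • X i : MvPolynomial σ K).IsHomogeneous 1) (g : G)
    {p : MvPolynomial σ K} {e : ℕ} (hp : p.IsHomogeneous e) : (g • p).IsHomogeneous e := by
  have hg : MulSemiringAction.toAlgHom K (MvPolynomial σ K) g =
      MvPolynomial.aeval fun i => g • X i :=
    algHom_ext fun i => by simp
  simpa [← hg] using hp.aeval _ (hX g)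

variable {K A G : Type*} [Field K] [Semiring A] [Algebra K A] [Group G] [Fintype G]
  [MulSemiringAction G A] [SMulCommClass G K A]

variable (K G) in
noncomputable def reynolds : A →ₗ[K] A :=
  (Fintype.card G : K)⁻¹ • ∑ g : G, (MulSemiringAction.toAlgHom K A g).toLinearMap

theorem reynolds_apply (p : A) : reynolds K G p = (Fintype.card G : K)⁻¹ • ∑ g : G, g • p := by
  simp [reynolds]

theorem smul_reynolds (g : G) (p : A) : g • reynolds K G p = reynolds K G p := by
  rw [reynolds_apply, smul_comm, smul_sum]
  congr 1
  exact Fintype.sum_bijective (g * ·) (Group.mulLeft_bijective g) _ _ fun x => (mul_smul g x p).symm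

theorem reynolds_eq_self (hcard : (Fintype.card G : K) ≠ 0) {p : A} (hp : ∀ g : G, g • p = p) :
    reynolds K G p = p := by
  rw [reynolds_apply, sum_congr rfl fun g _ => hp g, sum_const, card_univ,
    ← Nat.cast_smul_eq_nsmul K, smul_smul, inv_mul_cancel₀ hcard, one_smul]

theorem reynolds_mul_of_forall_smul_eq (p : A) {q : A} (hq : ∀ g : G, g • q = q) :
    reynolds K G (p * q) = reynolds K G p * q := by
  simp only [reynolds_apply, smul_mul', hq, ← sum_mul, smul_mul_assoc]

theorem isHomogeneous_reynolds {σ : Type*} [MulSemiringAction G (MvPolynomial σ K)]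
    [SMulCommClass G K (MvPolynomial σ K)]
    (hX : ∀ (g : G) i, (g • X i : MvPolynomial σ K).IsHomogeneous 1)
    {p : MvPolynomial σ K} {e : ℕ} (hp : p.IsHomogeneous e) :
    (reynolds K G p).IsHomogeneous e := by
  rw [reynolds_apply]
  exact Submodule.smul_mem (homogeneousSubmodule σ K e) _ <| Submodule.sum_mem _ fun g _ =>
    hp.smul_of_isHomogeneous_smul_X hX g

/-- Averaging the relation over `G` keeps its coefficients homogeneous and makes them invariants
of degree `< d i`, hence polynomials in the other generators. -/
theorem mem_adjoin_of_eq_sum_mul {σ ι : Type*} [Fintype ι]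
    [MulSemiringAction G (MvPolynomial σ K)] [SMulCommClass G K (MvPolynomial σ K)]
    (hX : ∀ (g : G) i, (g • X i : MvPolynomial σ K).IsHomogeneous 1)
    (hcard : (Fintype.card G : K) ≠ 0) {f : ι → MvPolynomial σ K} {d : ι → ℕ}
    (hf : ∀ i, (f i).IsHomogeneous (d i)) (hd : ∀ i, 0 < d i)
    (hfinv : ∀ i (g : G), g • f i = f i)
    (hgen : ∀ p : MvPolynomial σ K, (∀ g : G, g • p = p) → p ∈ Algebra.adjoin K (Set.range f))
    {i : ι} {h : ι → MvPolynomial σ K} (hh : h ∈ shiftedHomogeneousSubmodule σ K d (d i))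
    (hhi : h i = 0) (hfi : f i = ∑ l, h l * f l) :
    f i ∈ Algebra.adjoin K (f '' {j | j ≠ i}) := by
  rw [← reynolds_eq_self hcard (hfinv i), hfi, map_sum]
  refine Subalgebra.sum_mem _ fun l _ => ?_
  rw [reynolds_mul_of_forall_smul_eq _ (hfinv l)]
  obtain rfl | hli := eq_or_ne l i
  · simp [hhi]
  refine Subalgebra.mul_mem _ ?_ (Algebra.subset_adjoin ⟨l, hli, rfl⟩)
  have hR := mem_adjoin_image_of_isHomogeneous hf (hgen _ (smul_reynolds · _))
    (isHomogeneous_reynolds hX (mem_shiftedHomogeneousSubmodule.1 hh l).1)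
  refine Algebra.adjoin_mono (Set.image_mono fun j hj => ?_) hR
  have := hd l
  have := hd i
  simp only [Set.mem_ofPred_eq] at hj ⊢
  rintro rfl
  omega

end Invariants

end MvPolynomial

/-- **The first syzygy module of the generating invariants is generated in degree
`≤ τ_G(V) + 1`.**
`G` is a finite group, `K` a field whose characteristic does not divide `|G|`, and `G`
acts on `T = K[V] = K[y₁,…,y_n]` by graded `K`-algebra automorphisms induced by a
finite-dimensional representation `V`.  Let `f₁,…,f_r` be a minimal set of homogeneous
generators of the invariant ring, `deg f_i = d_i`, let `I = (f₁,…,f_r)T` and let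
`τ_G(V)` be the smallest `d` such that every homogeneous polynomial of degree `d` lies
in `I`.  Then the syzygy module
`U = {(w₁,…,w_r) ∈ T[-d₁] ⊕ ⋯ ⊕ T[-d_r] : ∑ w_i f_i = 0}` is generated as a `T`-module
by its homogeneous elements of (shifted) degree at most `τ_G(V) + 1`; here
`(w₁,…,w_r)` is homogeneous of degree `dd` when each `w_i` is homogeneous of degree
`dd - d_i`. -/
theorem first_syzygy_module_generated_in_low_degree
    {K : Type} [Field K] {G : Type} [Group G] [Fintype G]
    (hG : ¬ (ringChar K ∣ Fintype.card G))
    {n : ℕ} [MulSemiringAction G (MvPolynomial (Fin n) K)]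
    (hC : ∀ (g : G) (c : K),
      g • (MvPolynomial.C c : MvPolynomial (Fin n) K) = MvPolynomial.C c)
    (hX : ∀ (g : G) (i : Fin n),
      g • (MvPolynomial.X i : MvPolynomial (Fin n) K)
        ∈ MvPolynomial.homogeneousSubmodule (Fin n) K 1)
    {r : ℕ} (f : Fin r → MvPolynomial (Fin n) K) (d : Fin r → ℕ)
    (hdpos : ∀ i, 0 < d i)
    (hfhom : ∀ i, (f i).IsHomogeneous (d i))
    (hfinv : ∀ (i : Fin r) (g : G), g • f i = f i)
    (hfgen : (Algebra.adjoin K (Set.range f) : Set (MvPolynomial (Fin n) K))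
      = {p | ∀ g : G, g • p = p})
    (hfmin : ∀ i, f i ∉ Algebra.adjoin K (f '' {j | j ≠ i}))
    (I : Ideal (MvPolynomial (Fin n) K)) (hI : I = Ideal.span (Set.range f))
    (τ : ℕ)
    (hτ : IsLeast {dd : ℕ |
      ∀ p : MvPolynomial (Fin n) K, p.IsHomogeneous dd → p ∈ I} τ)
    (U : Submodule (MvPolynomial (Fin n) K) (Fin r → MvPolynomial (Fin n) K))
    (hU : ∀ w : Fin r → MvPolynomial (Fin n) K, w ∈ U ↔ ∑ i, w i * f i = 0) :
    U = Submodule.span (MvPolynomial (Fin n) K)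
      {w : Fin r → MvPolynomial (Fin n) K | (∑ i, w i * f i = 0) ∧
        ∃ dd ≤ τ + 1, ∀ (i : Fin r) (mo : Fin n →₀ ℕ),
          MvPolynomial.coeff mo (w i) ≠ 0 → (mo.sum fun _ k => k) + d i = dd} := by
  subst hI
  have : SMulCommClass G K (MvPolynomial (Fin n) K) :=
    ⟨fun g c p => by rw [MvPolynomial.smul_eq_C_mul, MvPolynomial.smul_eq_C_mul, smul_mul', hC]⟩
  have hcard : (Fintype.card G : K) ≠ 0 := fun h =>
    hG ((CharP.cast_eq_zero_iff K (ringChar K) _).1 h)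
  have hgen (p : MvPolynomial (Fin n) K) (hp : ∀ g : G, g • p = p) :
      p ∈ Algebra.adjoin K (Set.range f) := (Set.ext_iff.1 hfgen p).2 hp
  have hd (i : Fin r) : d i ≤ τ := not_lt.1 fun hi => by
    obtain ⟨h, hh, hhi, hfi⟩ := MvPolynomial.exists_eq_sum_mul_of_lt hfhom hτ.1 hi
    exact hfmin i (MvPolynomial.mem_adjoin_of_eq_sum_mul hX hcard hfhom hdpos hfinv hgen hh hhi hfi)
  refine le_antisymm (fun w hw => ?_) (Submodule.span_le.2 fun w hw => (hU w).2 hw.1)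
  convert MvPolynomial.mem_span_of_sum_mul_eq_zero hfhom hτ.1 hd ((hU w).1 hw) using 4
  simp only [MvPolynomial.mem_shiftedHomogeneousSubmodule_iff_coeff]
  rfl
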